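/- Let A be an n×n matrix over a field F and B an n×n matrix over F with rank(B) ≤ m, and let q be the characteristic polynomial of A+B. Then for each eigenvalue λ of A (in an algebraic closure of F), m_λ(q) ≥ alg_λ(A) − Σ_{j=1}^{m} k_{λ,j}, where k_{λ,1} ≥ ... ≥ k_{λ,m} are the sizes of the largest m Jordan blocks of A for λ (padded with zeros). -/

import Mathlib

/-!
Put `N = A - λ` and `p = k_{λ,m+1}`. For every matrix `M`, the kernel of `(M - λ)^p` lies in the
generalized eigenspace, so `n - rank ((M - λ)^p) ≤ m_λ(charpoly M)`, with equality for `p = n`.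
The difference `(N + B)^p - N^p` is built from `p` products each containing a factor `B`, so
`rank ((N + B)^p) ≤ rank (N^p) + p m`. The Jordan rank identities turn `n - rank (N^p)` into
`∑ᵢ min(kᵢ, p)`, and only the `m` largest blocks exceed `p`, whence
`∑ᵢ kᵢ - ∑ᵢ min(kᵢ, p) ≤ ∑_{i<m} kᵢ - m p`. Passing from `F` to its algebraic closure does not
increase the rank of `B`, since a rank factorization of `B` maps to one over the closure.
-/

open Module

/-- `k` is the nonincreasing, zero-padded sequence of the sizes of the Jordan blocks of `A`
for the eigenvalue `lam` (indexed from `0`, so `k 0 = k_{λ,1}`), characterized by the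
standard rank identities `rank((A-λI)^j) = n - ∑_{i<n} min(kᵢ, j)` for all `j`. -/
def JordanSizes {F : Type*} [Field F] {n : ℕ} (A : Matrix (Fin n) (Fin n) F) (lam : F)
    (k : ℕ → ℕ) : Prop :=
  Antitone k ∧ (∀ i, n ≤ i → k i = 0) ∧
    ∀ j : ℕ, ((A - lam • (1 : Matrix (Fin n) (Fin n) F)) ^ j).rank
      = n - ∑ i ∈ Finset.range n, min (k i) j

namespace Matrix

variable {m n ι K : Type*} [Field K]

theorem rank_add_le [Fintype n] (A B : Matrix m n K) : (A + B).rank ≤ A.rank + B.rank := by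
  rw [rank, rank, rank, mulVecLin_add]
  exact (Submodule.finrank_mono (LinearMap.range_add_le _ _)).trans
    (Submodule.finrank_add_le_finrank_add_finrank _ _)

theorem exists_eq_mul_of_rank [Fintype n] [DecidableEq n] (B : Matrix m n K) :
    ∃ (C : Matrix m (Fin B.rank) K) (D : Matrix (Fin B.rank) n K), B = C * D := by
  let e : LinearMap.range B.mulVecLin ≃ₗ[K] (Fin B.rank → K) := (finBasis K _).equivFun
  refine ⟨LinearMap.toMatrix' ((LinearMap.range B.mulVecLin).subtype ∘ₗ e.symm.toLinearMap),
    LinearMap.toMatrix' (e.toLinearMap ∘ₗ B.mulVecLin.rangeRestrict), ?_⟩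
  rw [← LinearMap.toMatrix'_comp]
  conv_lhs => rw [← LinearMap.toMatrix'_toLin' B]
  congr 1
  refine LinearMap.ext fun x ↦ ?_
  simp [LinearMap.comp_apply]

theorem rank_map_le {L : Type*} [Field L] [Fintype n] (f : K →+* L) (B : Matrix m n K) :
    (B.map f).rank ≤ B.rank := by
  classical
  obtain ⟨C, D, hCD⟩ := exists_eq_mul_of_rank B
  have hmap : B.map f = C.map f * D.map f := by rw [← Matrix.map_mul, ← hCD]
  rw [hmap]
  exact (rank_mul_le_left _ _).trans ((rank_le_card_width _).trans_eq (Fintype.card_fin _))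

theorem rank_add_finrank_ker [Fintype ι] (A : Matrix ι ι K) :
    A.rank + finrank K (LinearMap.ker A.mulVecLin) = Fintype.card ι := by
  rw [rank, LinearMap.finrank_range_add_finrank_ker, finrank_fintype_fun_eq_card]

section Square

variable [Fintype ι] [DecidableEq ι]

theorem rank_add_pow_sub_pow_le (N B : Matrix ι ι K) (p : ℕ) :
    ((N + B) ^ p - N ^ p).rank ≤ p * B.rank := by
  induction p with
  | zero => simp
  | succ p ih =>
    have hexpand : (N + B) ^ (p + 1) - N ^ (p + 1)
        = ((N + B) ^ p - N ^ p) * (N + B) + N ^ p * B := by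
      noncomm_ring
    calc ((N + B) ^ (p + 1) - N ^ (p + 1)).rank
        ≤ (((N + B) ^ p - N ^ p) * (N + B)).rank + (N ^ p * B).rank := hexpand ▸ rank_add_le _ _
      _ ≤ p * B.rank + B.rank :=
        add_le_add ((rank_mul_le_left _ _).trans ih) (rank_mul_le_right _ _)
      _ = (p + 1) * B.rank := by ring

theorem rank_add_pow_le (N B : Matrix ι ι K) (p : ℕ) :
    ((N + B) ^ p).rank ≤ (N ^ p).rank + p * B.rank := by
  calc ((N + B) ^ p).rank = (N ^ p + ((N + B) ^ p - N ^ p)).rank := by rw [add_sub_cancel]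
    _ ≤ (N ^ p).rank + p * B.rank :=
      (rank_add_le _ _).trans (add_le_add le_rfl (rank_add_pow_sub_pow_le N B p))

theorem ker_pow_sub_smul_eq_genEigenspace (M : Matrix ι ι K) (μ : K) (p : ℕ) :
    LinearMap.ker ((M - μ • 1) ^ p).mulVecLin = End.genEigenspace M.mulVecLin μ p := by
  rw [End.genEigenspace_nat, ← toLin'_apply', ← toLin'_apply']
  simp [End.one_eq_id]

theorem card_le_rootMultiplicity_add_rank_pow (M : Matrix ι ι K) (μ : K) (p : ℕ) :
    Fintype.card ι ≤ M.charpoly.rootMultiplicity μ + ((M - μ • 1) ^ p).rank := by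
  have hker := LinearMap.finrank_genEigenspace_le M.mulVecLin μ p
  rw [charpoly_mulVecLin, ← ker_pow_sub_smul_eq_genEigenspace] at hker
  have := rank_add_finrank_ker ((M - μ • 1) ^ p)
  omega

theorem rootMultiplicity_add_rank_pow_card (M : Matrix ι ι K) (μ : K) :
    M.charpoly.rootMultiplicity μ + ((M - μ • 1) ^ Fintype.card ι).rank = Fintype.card ι := by
  have hmax := LinearMap.finrank_maxGenEigenspace_eq M.mulVecLin μ
  rw [End.maxGenEigenspace_eq_genEigenspace_finrank, finrank_fintype_fun_eq_card,
    charpoly_mulVecLin, ← ker_pow_sub_smul_eq_genEigenspace] at hmax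
  rw [← hmax, add_comm, rank_add_finrank_ker]

end Square

end Matrix

theorem Antitone.sum_range_add_mul_le {k : ℕ → ℕ} (hk : Antitone k) (n m : ℕ) :
    ∑ i ∈ Finset.range n, k i + m * k m
      ≤ ∑ i ∈ Finset.range n, min (k i) (k m) + ∑ i ∈ Finset.range m, k i := by
  have hsplit : ∑ i ∈ Finset.range n, k i
      = ∑ i ∈ Finset.range n, min (k i) (k m) + ∑ i ∈ Finset.range n, (k i - k m) := by
    rw [← Finset.sum_add_distrib]
    exact Finset.sum_congr rfl fun i _ ↦ by omega
  have hexcess : ∑ i ∈ Finset.range n, (k i - k m) ≤ ∑ i ∈ Finset.range m, (k i - k m) :=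
    Finset.sum_le_sum_of_ne_zero fun i _ hi ↦ by
      by_contra him
      exact hi (Nat.sub_eq_zero_of_le (hk (by simpa using him)))
  have hhead : ∑ i ∈ Finset.range m, (k i - k m) + m * k m = ∑ i ∈ Finset.range m, k i := by
    calc ∑ i ∈ Finset.range m, (k i - k m) + m * k m
        = ∑ i ∈ Finset.range m, (k i - k m + k m) := by simp [Finset.sum_add_distrib]
      _ = ∑ i ∈ Finset.range m, k i :=
        Finset.sum_congr rfl fun i hi ↦ Nat.sub_add_cancel (hk (Finset.mem_range.1 hi).le)
  omega

theorem JordanSizes.rootMultiplicity_sub_sum_le_rootMultiplicity_add {K : Type*} [Field K]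
    {n m : ℕ} {A : Matrix (Fin n) (Fin n) K} {lam : K} {k : ℕ → ℕ}
    (hk : JordanSizes A lam k)
    (B : Matrix (Fin n) (Fin n) K) (hB : B.rank ≤ m) :
    A.charpoly.rootMultiplicity lam - ∑ j ∈ Finset.range m, k j
      ≤ (A + B).charpoly.rootMultiplicity lam := by
  obtain ⟨hanti, -, hrank⟩ := hk
  set N := A - lam • (1 : Matrix (Fin n) (Fin n) K)
  have hshift : A + B - lam • 1 = N + B := add_sub_right_comm A B _
  have hAB := (A + B).card_le_rootMultiplicity_add_rank_pow lam (k m)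
  have hA := A.rootMultiplicity_add_rank_pow_card lam
  rw [hshift, Fintype.card_fin] at hAB
  rw [Fintype.card_fin] at hA
  have hpert := (N.rank_add_pow_le B (k m)).trans
    (add_le_add le_rfl (Nat.mul_le_mul_left (k m) hB))
  have hcomb := hanti.sum_range_add_mul_le n m
  have hmin_card : ∑ i ∈ Finset.range n, min (k i) n ≤ ∑ i ∈ Finset.range n, k i :=
    Finset.sum_le_sum fun i _ ↦ min_le_left _ _
  have hmin_km : ∑ i ∈ Finset.range n, min (k i) (k m) ≤ ∑ i ∈ Finset.range n, k i :=
    Finset.sum_le_sum fun i _ ↦ min_le_left _ _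
  rw [hrank] at hpert hA
  rw [mul_comm] at hpert
  omega

theorem stmt_7_general {F : Type*} [Field F] {n : ℕ}
    (A B : Matrix (Fin n) (Fin n) F) (m : ℕ) (hB : B.rank ≤ m)
    (q : Polynomial F) (hq : q = (A + B).charpoly)
    (lam : AlgebraicClosure F)
    (k : ℕ → ℕ)
    (hk : JordanSizes (A.map (algebraMap F (AlgebraicClosure F))) lam k) :
    (q.map (algebraMap F (AlgebraicClosure F))).rootMultiplicity lam
      ≥ ((A.map (algebraMap F (AlgebraicClosure F))).charpoly).rootMultiplicity lam
        - ∑ j ∈ Finset.range m, k j := by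
  rw [hq, ← Matrix.charpoly_map, Matrix.map_add _ (map_add _)]
  exact hk.rootMultiplicity_sub_sum_le_rootMultiplicity_add _ ((B.rank_map_le _).trans hB)

/-- If `A, B` are `n×n` matrices over a field `F` with `rank B ≤ m`, and
`q` is the characteristic polynomial of `A + B`, then for every eigenvalue `λ` of `A`
in the algebraic closure of `F`,
`m_λ(q) ≥ alg_λ(A) − ∑_{j=1}^m k_{λ,j}` where the `k_{λ,j}` are the Jordan block sizes
of `A` at `λ` in nonincreasing order (zero-padded). -/
theorem stmt_7 {F : Type*} [Field F] {n : ℕ}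
    (A B : Matrix (Fin n) (Fin n) F) (m : ℕ) (hm : 0 < m) (hB : B.rank ≤ m)
    (q : Polynomial F) (hq : q = (A + B).charpoly)
    (lam : AlgebraicClosure F)
    (heig : ((A.map (algebraMap F (AlgebraicClosure F))).charpoly).IsRoot lam)
    (k : ℕ → ℕ)
    (hk : JordanSizes (A.map (algebraMap F (AlgebraicClosure F))) lam k) :
    (q.map (algebraMap F (AlgebraicClosure F))).rootMultiplicity lam
      ≥ ((A.map (algebraMap F (AlgebraicClosure F))).charpoly).rootMultiplicity lam
        - ∑ j ∈ Finset.range m, k j :=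
  stmt_7_general A B m hB q hq lam k hk
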